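/- Let R be a ring with proper involution and let m be a positive integer. An element a ∈ R has an m-weak group inverse if and only if a has a Drazin inverse d and there exist x ∈ R and n ∈ ℕ such that a x^2 = x, ((a^m)^* a^(m+1) x)^* = (a^m)^* a^(m+1) x, and a^n = a x a^n. In this case, a d x is an m-weak group inverse of a (where x satisfies the preceding three conditions). -/

import Mathlib

/-- `z` is an `m`-weak group inverse of `a`. -/
def IsMWGI {R : Type*} [Ring R] [StarRing R] (m : ℕ) (a z : R) : Prop :=
  a * z ^ 2 = z ∧ ∃ k : ℕ, z * a ^ (k + 1) = a ^ k ∧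
    star (a ^ k) * a ^ (m + 1) * z = star (a ^ k) * a ^ m

/-- `w` is a weak group inverse of `b`. -/
def IsWGI {R : Type*} [Ring R] [StarRing R] (b w : R) : Prop :=
  b * w ^ 2 = w ∧ star (star b * b ^ 2 * w) = star b * b ^ 2 * w ∧
    ∃ k : ℕ, b ^ k = w * b ^ (k + 1)

/-- `x` is a group inverse of `u`. -/
def IsGroupInv {R : Type*} [Ring R] (u x : R) : Prop :=
  u * x ^ 2 = x ∧ u * x = x * u ∧ u = u ^ 2 * x

/-- `d` is a Drazin inverse of `a`. -/
def IsDrazin {R : Type*} [Ring R] (a d : R) : Prop :=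
  a * d ^ 2 = d ∧ a * d = d * a ∧ ∃ k : ℕ, a ^ k = d * a ^ (k + 1)

/-- `y` is a core-EP inverse of `a`. -/
def IsCoreEP {R : Type*} [Ring R] [StarRing R] (a y : R) : Prop :=
  a * y ^ 2 = y ∧ star (a * y) = a * y ∧ ∃ k : ℕ, a ^ k = y * a ^ (k + 1)

/-!
If `z` is an `m`-weak group inverse of `a` with index `k`, then `z ^ (k + 2) * a ^ (k + 1)` is a
Drazin inverse of `a` and `x := z` itself satisfies the three conditions. For the symmetry
condition, `w = a ^ (m + 1) * z` equals `a ^ k * a ^ (m + 1) * z ^ (k + 1)`, so the defining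
identity gives `w⋆ w = w⋆ a ^ m`, which makes `(a ^ m)⋆ w` self-adjoint.

Conversely, `e = a * d` is an idempotent with `e * a ^ k = a ^ k`; the conditions on `x` give
`e * x = x` and `x * e = d`, hence `x * a ^ k = d * a ^ k`, and both defining identities of an
`m`-weak group inverse follow with index `m + k`.
-/

section PowerIdentities

variable {M : Type*} [Monoid M] {a z : M}

theorem mul_pow_add_two_of_mul_sq (h : a * z ^ 2 = z) (j : ℕ) :
    a * z ^ (j + 2) = z ^ (j + 1) := by
  rw [add_comm, pow_add, ← mul_assoc, h, ← pow_succ']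

theorem pow_mul_pow_succ_of_mul_sq (h : a * z ^ 2 = z) : ∀ j : ℕ, a ^ j * z ^ (j + 1) = z
  | 0 => by simp
  | j + 1 => by
    rw [pow_succ a, mul_assoc, mul_pow_add_two_of_mul_sq h, pow_mul_pow_succ_of_mul_sq h j]

theorem pow_mul_pow_add_of_mul_pow_succ {k : ℕ} (h : z * a ^ (k + 1) = a ^ k) :
    ∀ j : ℕ, z ^ j * a ^ (k + j) = a ^ k
  | 0 => by simp
  | j + 1 => by
    rw [pow_succ, show k + (j + 1) = k + 1 + j by omega, pow_add a (k + 1), mul_assoc,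
      ← mul_assoc z, h, ← pow_add, pow_mul_pow_add_of_mul_pow_succ h j]

end PowerIdentities

theorem isDrazin_pow_mul_pow_of_mul_sq {R : Type*} [Ring R] {a z : R} {k : ℕ}
    (haz : a * z ^ 2 = z) (hza : z * a ^ (k + 1) = a ^ k) :
    IsDrazin a (z ^ (k + 2) * a ^ (k + 1)) := by
  have hza' : z * a ^ (k + 2) = a ^ (k + 1) := by
    rw [pow_succ a (k + 1), ← mul_assoc, hza, ← pow_succ]
  have had : a * (z ^ (k + 2) * a ^ (k + 1)) = z ^ (k + 1) * a ^ (k + 1) := by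
    rw [← mul_assoc, mul_pow_add_two_of_mul_sq haz]
  have hda : z ^ (k + 2) * a ^ (k + 1) * a = z ^ (k + 1) * a ^ (k + 1) := by
    rw [mul_assoc, ← pow_succ, pow_succ z (k + 1), mul_assoc, hza']
  refine ⟨?_, had.trans hda.symm, k + 1, ?_⟩
  · calc a * (z ^ (k + 2) * a ^ (k + 1)) ^ 2
        = z ^ (k + 1) * (a ^ (k + 1) * z ^ (k + 2)) * a ^ (k + 1) := by
          rw [sq, ← mul_assoc, had]; simp only [mul_assoc]
      _ = z ^ (k + 2) * a ^ (k + 1) := by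
          rw [pow_mul_pow_succ_of_mul_sq haz, ← pow_succ]
  · rw [mul_assoc, ← pow_add, pow_mul_pow_add_of_mul_pow_succ hza']

namespace IsDrazin

variable {R : Type*} [Ring R] {a d x : R}

theorem commute (hd : IsDrazin a d) : Commute a d := hd.2.1

theorem isIdempotentElem_mul (hd : IsDrazin a d) : IsIdempotentElem (a * d) := by
  rw [IsIdempotentElem, mul_assoc, ← mul_assoc d, ← hd.commute.eq, mul_assoc, ← sq, hd.1]

theorem mul_mul_self (hd : IsDrazin a d) : d * (a * d) = d := by
  rw [← mul_assoc, ← hd.commute.eq, mul_assoc, ← sq, hd.1]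

theorem mul_mul_pow_of_pow_eq {k : ℕ} (hd : IsDrazin a d) (hk : a ^ k = d * a ^ (k + 1)) :
    a * d * a ^ k = a ^ k := by
  rw [hd.commute.eq, mul_assoc, ← pow_succ', ← hk]

theorem mul_eq_pow_mul (hd : IsDrazin a d) (n : ℕ) : a * d = a ^ n * (a * d ^ (n + 1)) := by
  rw [← mul_assoc, ← pow_succ, ← hd.commute.mul_pow, hd.isIdempotentElem_mul.pow_succ_eq]

theorem mul_mul_eq_of_mul_sq (hd : IsDrazin a d) (hx : a * x ^ 2 = x) : a * d * x = x := by
  obtain ⟨k, hk⟩ := hd.2.2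
  conv_lhs => rw [← pow_mul_pow_succ_of_mul_sq hx k, ← mul_assoc, hd.mul_mul_pow_of_pow_eq hk]
  exact pow_mul_pow_succ_of_mul_sq hx k

theorem mul_mul_mul_eq_of_pow_eq {n : ℕ} (hd : IsDrazin a d) (hn : a ^ n = a * x * a ^ n) :
    a * x * (a * d) = a * d := by
  rw [hd.mul_eq_pow_mul n, ← mul_assoc, ← hn]

theorem mul_mul_eq_of_mul_sq_of_pow_eq {n : ℕ} (hd : IsDrazin a d) (hx : a * x ^ 2 = x)
    (hn : a ^ n = a * x * a ^ n) : x * (a * d) = d :=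
  calc x * (a * d) = d * (a * x * (a * d)) := by
        conv_lhs => rw [← hd.mul_mul_eq_of_mul_sq hx]
        rw [hd.commute.eq]; simp only [mul_assoc]
    _ = d := by rw [hd.mul_mul_mul_eq_of_pow_eq hn, hd.mul_mul_self]

theorem isMWGI [StarRing R] {m n : ℕ} (hd : IsDrazin a d) (hx : a * x ^ 2 = x)
    (hsa : IsSelfAdjoint (star (a ^ m) * a ^ (m + 1) * x)) (hn : a ^ n = a * x * a ^ n) :
    IsMWGI m a (a * d * x) := by
  obtain ⟨k, hk⟩ := hd.2.2
  have hxk : x * a ^ k = d * a ^ k := by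
    rw [← hd.mul_mul_eq_of_mul_sq_of_pow_eq hx hn, mul_assoc, hd.mul_mul_pow_of_pow_eq hk]
  rw [hd.mul_mul_eq_of_mul_sq hx]
  refine ⟨hx, m + k, ?_, ?_⟩
  · calc x * a ^ (m + k + 1) = x * a ^ k * a ^ (m + 1) := by
          rw [mul_assoc, ← pow_add, show k + (m + 1) = m + k + 1 by omega]
      _ = d * a ^ (k + 1) * a ^ m := by
          rw [hxk, mul_assoc, mul_assoc, ← pow_add, ← pow_add,
            show k + (m + 1) = k + 1 + m by omega]
      _ = a ^ (m + k) := by rw [← hk, ← pow_add, add_comm]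
  · calc star (a ^ (m + k)) * a ^ (m + 1) * x
          = star (a ^ k) * (star (a ^ m) * a ^ (m + 1) * x) := by
          rw [pow_add, star_mul]; simp only [mul_assoc]
      _ = star (star (a ^ m) * a ^ (m + 1) * (x * a ^ k)) := by
          rw [← mul_assoc _ x, star_mul, hsa.star_eq]
      _ = star (star (a ^ m) * a ^ m * (a * d * a ^ k)) := by
          rw [hxk, pow_succ]; simp only [mul_assoc]
      _ = star (a ^ (m + k)) * a ^ m := by
          rw [hd.mul_mul_pow_of_pow_eq hk]; simp only [pow_add, star_mul, star_star, mul_assoc]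

end IsDrazin

namespace IsMWGI

variable {R : Type*} [Ring R] [StarRing R] {m : ℕ} {a z : R}

theorem exists_isDrazin (hz : IsMWGI m a z) : ∃ d, IsDrazin a d := by
  obtain ⟨haz, k, hza, -⟩ := hz
  exact ⟨_, isDrazin_pow_mul_pow_of_mul_sq haz hza⟩

theorem exists_pow_eq_mul_mul_pow (hz : IsMWGI m a z) : ∃ n, a ^ n = a * z * a ^ n := by
  obtain ⟨-, k, hza, -⟩ := hz
  exact ⟨k + 1, by rw [mul_assoc, hza, pow_succ']⟩

theorem isSelfAdjoint (hz : IsMWGI m a z) : IsSelfAdjoint (star (a ^ m) * a ^ (m + 1) * z) := by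
  obtain ⟨haz, k, -, hstar⟩ := hz
  have hw : a ^ (m + 1) * z = a ^ k * (a ^ (m + 1) * z ^ (k + 1)) := by
    conv_lhs => rw [← pow_mul_pow_succ_of_mul_sq haz k]
    rw [← mul_assoc, ← mul_assoc, ← pow_add, ← pow_add, add_comm]
  have hww : star (a ^ (m + 1) * z) * (a ^ (m + 1) * z) = star (a ^ (m + 1) * z) * a ^ m := by
    nth_rewrite 1 [hw]
    rw [star_mul, mul_assoc, ← mul_assoc (star (a ^ k)), hstar, ← mul_assoc, ← star_mul, ← hw]
  rw [mul_assoc, ← star_star (star (a ^ m) * _), star_mul, star_star, ← hww]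
  exact IsSelfAdjoint.star_iff.mpr (IsSelfAdjoint.star_mul_self _)

end IsMWGI

theorem mwgi_iff_drazin_symm_general {R : Type*} [Ring R] [StarRing R]
    (m : ℕ) (a : R) :
    ((∃ z : R, IsMWGI m a z) ↔
      ∃ d : R, IsDrazin a d ∧ ∃ x : R, ∃ n : ℕ,
        a * x ^ 2 = x ∧
        star (star (a ^ m) * a ^ (m + 1) * x) = star (a ^ m) * a ^ (m + 1) * x ∧
        a ^ n = a * x * a ^ n) ∧
      ∀ d x : R, ∀ n : ℕ, IsDrazin a d →
        a * x ^ 2 = x →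
        star (star (a ^ m) * a ^ (m + 1) * x) = star (a ^ m) * a ^ (m + 1) * x →
        a ^ n = a * x * a ^ n →
        IsMWGI m a (a * d * x) := by
  refine ⟨⟨fun ⟨z, hz⟩ => ?_, fun ⟨d, hd, x, n, hx, hsa, hn⟩ => ⟨a * d * x, hd.isMWGI hx hsa hn⟩⟩,
    fun d x n hd hx hsa hn => hd.isMWGI hx hsa hn⟩
  obtain ⟨d, hd⟩ := hz.exists_isDrazin
  obtain ⟨n, hn⟩ := hz.exists_pow_eq_mul_mul_pow
  exact ⟨d, hd, z, n, hz.1, hz.isSelfAdjoint, hn⟩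

theorem mwgi_iff_drazin_symm {R : Type*} [Ring R] [StarRing R]
    (hproper : ∀ x : R, star x * x = 0 → x = 0)
    (m : ℕ) (hm : 0 < m) (a : R) :
    ((∃ z : R, IsMWGI m a z) ↔
      ∃ d : R, IsDrazin a d ∧ ∃ x : R, ∃ n : ℕ,
        a * x ^ 2 = x ∧
        star (star (a ^ m) * a ^ (m + 1) * x) = star (a ^ m) * a ^ (m + 1) * x ∧
        a ^ n = a * x * a ^ n) ∧
      ∀ d x : R, ∀ n : ℕ, IsDrazin a d →
        a * x ^ 2 = x →
        star (star (a ^ m) * a ^ (m + 1) * x) = star (a ^ m) * a ^ (m + 1) * x →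
        a ^ n = a * x * a ^ n →
        IsMWGI m a (a * d * x) :=
  mwgi_iff_drazin_symm_general m a
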